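/- arXiv:1109.3129 — 4 statements merged into one kernel-verified Lean document; each statement's English description precedes it below -/
import Mathlib

section
/- The operator H = -∂_r² - (1/r)∂_r + cos(2Q)/r², where Q(r) = 2·arctan(r), admits the factorization H = L*L in the sense that for all smooth compactly supported f on (0,∞), H f = L*(L f), where L = ∂_r + h₃/r, L* = -∂_r + (h₃-1)/r, with h₃(r) = (r²-1)/(r²+1). -/
open Real

theorem H_eq_Lstar_L :
    ∀ f : ℝ → ℝ, ContDiff ℝ (⊤ : ℕ∞) f → HasCompactSupport f →
      ∀ r : ℝ, 0 < r →
        -(deriv (deriv f) r) - deriv f r / r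
            + Real.cos (2 * (2 * arctan r)) / r ^ 2 * f r
        = -(deriv (fun s : ℝ =>
              deriv f s + ((s ^ 2 - 1) / (s ^ 2 + 1)) / s * f s) r)
            + (((r ^ 2 - 1) / (r ^ 2 + 1)) - 1) / r *
              (deriv f r + ((r ^ 2 - 1) / (r ^ 2 + 1)) / r * f r) := by
  intro f hf _ r hr
  have hr0 : r ≠ 0 := ne_of_gt hr
  have hden : r ^ 2 + 1 ≠ 0 := by positivity
  have hfi : ContDiff ℝ ((⊤ : ℕ∞) : WithTop ℕ∞) f := hf.of_le (by simp)
  obtain ⟨hfd, hf'⟩ := contDiff_infty_iff_deriv.mp hfi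
  obtain ⟨hf'd, _⟩ := contDiff_infty_iff_deriv.mp hf'
  -- derivatives of f and deriv f at r
  have Hf : HasDerivAt f (deriv f r) r := (hfd r).hasDerivAt
  have Hf' : HasDerivAt (deriv f) (deriv (deriv f) r) r := (hf'd r).hasDerivAt
  -- derivative of g s = ((s^2-1)/(s^2+1))/s
  have h1 : HasDerivAt (fun s : ℝ => s ^ 2 - 1) (2 * r) r := by
    simpa using (hasDerivAt_pow 2 r).sub_const 1
  have h2 : HasDerivAt (fun s : ℝ => s ^ 2 + 1) (2 * r) r := by
    simpa using (hasDerivAt_pow 2 r).add_const 1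
  have h3 : HasDerivAt (fun s : ℝ => (s ^ 2 - 1) / (s ^ 2 + 1))
      ((2 * r * (r ^ 2 + 1) - (r ^ 2 - 1) * (2 * r)) / (r ^ 2 + 1) ^ 2) r :=
    h1.div h2 hden
  have hg : HasDerivAt (fun s : ℝ => ((s ^ 2 - 1) / (s ^ 2 + 1)) / s)
      (((2 * r * (r ^ 2 + 1) - (r ^ 2 - 1) * (2 * r)) / (r ^ 2 + 1) ^ 2 * r
        - (r ^ 2 - 1) / (r ^ 2 + 1) * 1) / r ^ 2) r :=
    h3.div (hasDerivAt_id r) hr0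
  have Hsum : HasDerivAt (fun s : ℝ =>
      deriv f s + ((s ^ 2 - 1) / (s ^ 2 + 1)) / s * f s)
      (deriv (deriv f) r +
        ((((2 * r * (r ^ 2 + 1) - (r ^ 2 - 1) * (2 * r)) / (r ^ 2 + 1) ^ 2 * r
          - (r ^ 2 - 1) / (r ^ 2 + 1) * 1) / r ^ 2) * f r
          + ((r ^ 2 - 1) / (r ^ 2 + 1)) / r * deriv f r)) r :=
    Hf'.add (hg.mul Hf)
  rw [Hsum.deriv]
  -- compute cos(4 arctan r)
  have hcos : Real.cos (2 * (2 * arctan r)) = 1 - 8 * r ^ 2 / (1 + r ^ 2) ^ 2 := by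
    have hsq : Real.sqrt (1 + r ^ 2) * Real.sqrt (1 + r ^ 2) = 1 + r ^ 2 :=
      Real.mul_self_sqrt (by positivity)
    have hs : Real.sin (2 * arctan r) = 2 * r / (1 + r ^ 2) := by
      rw [Real.sin_two_mul, Real.sin_arctan, Real.cos_arctan,
        show (2:ℝ) * (r / Real.sqrt (1 + r ^ 2)) * (1 / Real.sqrt (1 + r ^ 2))
          = 2 * r / (Real.sqrt (1 + r ^ 2) * Real.sqrt (1 + r ^ 2)) by ring, hsq]
    have hcos2 : Real.cos (2 * (2 * arctan r)) = 1 - 2 * Real.sin (2 * arctan r) ^ 2 := by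
      rw [Real.cos_two_mul']
      have := Real.sin_sq_add_cos_sq (2 * arctan r); linarith
    rw [hcos2, hs]
    field_simp
    ring
  rw [hcos]
  field_simp
  ring
end

section
/- The function ψ₀(r) = (1/2)( (1+r²)·log(1+r²)/r² − 1 ) satisfies H̃ ψ₀ = 0 on (0,∞), where H̃ f = -f'' - f'/r + (4/(r²(1+r²))) f. -/
open Real Filter Topology

/-! Away from `0`, `ψ₀' r = (r² - log (1 + r²)) / r³` and
`ψ₀'' r = 2 / (1 + r²) - 3 (r² - log (1 + r²)) / r⁴`; substituting into `H̃ ψ₀`,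
the logarithms cancel and so do the rational terms. -/

noncomputable def psi0 (s : ℝ) : ℝ :=
  (1 / 2) * ((1 + s ^ 2) * Real.log (1 + s ^ 2) / s ^ 2 - 1)

lemma hasDerivAt_log_one_add_sq (s : ℝ) :
    HasDerivAt (fun s : ℝ => Real.log (1 + s ^ 2)) (2 * s / (1 + s ^ 2)) s := by
  have h : HasDerivAt (fun s : ℝ => 1 + s ^ 2) (2 * s) s := by
    simpa using (hasDerivAt_pow 2 s).const_add 1
  exact h.log (by positivity)

lemma hasDerivAt_psi0 {s : ℝ} (hs : s ≠ 0) :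
    HasDerivAt psi0 ((s ^ 2 - Real.log (1 + s ^ 2)) / s ^ 3) s := by
  have hsq : HasDerivAt (fun s : ℝ => s ^ 2) (2 * s) s := by
    simpa using hasDerivAt_pow 2 s
  have h := (((hsq.const_add 1).mul (hasDerivAt_log_one_add_sq s)).div hsq
    (pow_ne_zero 2 hs)).sub_const 1 |>.const_mul (1 / 2 : ℝ)
  have : 1 + s ^ 2 ≠ 0 := by positivity
  refine h.congr_deriv ?_
  simp only [Pi.mul_apply]
  field_simp
  ring

lemma deriv_psi0_eventuallyEq {r : ℝ} (hr : r ≠ 0) :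
    deriv psi0 =ᶠ[𝓝 r] fun s => (s ^ 2 - Real.log (1 + s ^ 2)) / s ^ 3 := by
  filter_upwards [isOpen_ne.mem_nhds hr] with s hs
  exact (hasDerivAt_psi0 hs).deriv

lemma hasDerivAt_deriv_psi0 {s : ℝ} (hs : s ≠ 0) :
    HasDerivAt (deriv psi0)
      (2 / (1 + s ^ 2) - 3 * (s ^ 2 - Real.log (1 + s ^ 2)) / s ^ 4) s := by
  have hsq : HasDerivAt (fun s : ℝ => s ^ 2) (2 * s) s := by
    simpa using hasDerivAt_pow 2 s
  have hcube : HasDerivAt (fun s : ℝ => s ^ 3) (3 * s ^ 2) s := by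
    simpa using hasDerivAt_pow 3 s
  have h := ((hsq.sub (hasDerivAt_log_one_add_sq s)).div hcube
    (pow_ne_zero 3 hs)).congr_of_eventuallyEq (deriv_psi0_eventuallyEq hs)
  have : 1 + s ^ 2 ≠ 0 := by positivity
  refine h.congr_deriv ?_
  simp only [Pi.sub_apply]
  field_simp
  ring

/-- `H̃ ψ₀ = 0` on `(0,∞)`, where `H̃ f = -f'' - f'/r + 4/(r²(1+r²)) f` and
`ψ₀(r) = (1/2)((1+r²) log(1+r²)/r² - 1)`. -/
theorem tildeH_psi0_eq_zero :
    ∀ r : ℝ, 0 < r →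
      -(deriv (deriv (fun s : ℝ =>
          (1 / 2) * ((1 + s ^ 2) * Real.log (1 + s ^ 2) / s ^ 2 - 1))) r)
        - deriv (fun s : ℝ =>
            (1 / 2) * ((1 + s ^ 2) * Real.log (1 + s ^ 2) / s ^ 2 - 1)) r / r
        + 4 / (r ^ 2 * (1 + r ^ 2)) *
          ((1 / 2) * ((1 + r ^ 2) * Real.log (1 + r ^ 2) / r ^ 2 - 1))
      = 0 := by
  intro r hr
  change -deriv (deriv psi0) r - deriv psi0 r / r + 4 / (r ^ 2 * (1 + r ^ 2)) * psi0 r = 0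
  rw [(hasDerivAt_deriv_psi0 hr.ne').deriv, (hasDerivAt_psi0 hr.ne').deriv, psi0]
  have : 1 + r ^ 2 ≠ 0 := by positivity
  field_simp
  ring
end

section
/- If u(t,r) solves -u_tt + u_rr + u_r/r = sin(2u)/(2r²) and w = u_r − sin(u)/r, then w satisfies w_tt − w_rr − w_r/r + (2(1+cos u)/r²) w = (sin(u)/r)(u_t² − w²) on its domain. -/
open Real Filter Topology

noncomputable def P1 (F : ℝ × ℝ → ℝ) : ℝ × ℝ → ℝ := fun q => fderiv ℝ F q (1, 0)
noncomputable def P2 (F : ℝ × ℝ → ℝ) : ℝ × ℝ → ℝ := fun q => fderiv ℝ F q (0, 1)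

lemma hasDerivAt_P1 {F : ℝ × ℝ → ℝ} (hF : ContDiff ℝ (⊤ : ℕ∞) F) (t r : ℝ) :
    HasDerivAt (fun t' => F (t', r)) (P1 F (t, r)) t := by
  have h : HasFDerivAt F (fderiv ℝ F (t, r)) (t, r) :=
    (hF.differentiable (by simp) (t, r)).hasFDerivAt
  have hl : HasDerivAt (fun t' : ℝ => ((t', r) : ℝ × ℝ)) ((1 : ℝ), (0 : ℝ)) t :=
    (hasDerivAt_id t).prodMk (hasDerivAt_const t r)
  exact h.comp_hasDerivAt t hl

lemma hasDerivAt_P2 {F : ℝ × ℝ → ℝ} (hF : ContDiff ℝ (⊤ : ℕ∞) F) (t r : ℝ) :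
    HasDerivAt (fun s => F (t, s)) (P2 F (t, r)) r := by
  have h : HasFDerivAt F (fderiv ℝ F (t, r)) (t, r) :=
    (hF.differentiable (by simp) (t, r)).hasFDerivAt
  have hl : HasDerivAt (fun s : ℝ => ((t, s) : ℝ × ℝ)) ((0 : ℝ), (1 : ℝ)) r :=
    (hasDerivAt_const r t).prodMk (hasDerivAt_id r)
  exact h.comp_hasDerivAt r hl

lemma contDiff_P1 {F : ℝ × ℝ → ℝ} (hF : ContDiff ℝ (⊤ : ℕ∞) F) : ContDiff ℝ (⊤ : ℕ∞) (P1 F) :=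
  (ContinuousLinearMap.apply ℝ ℝ ((1 : ℝ), (0 : ℝ))).contDiff.comp (hF.fderiv_right (by simp))

lemma contDiff_P2 {F : ℝ × ℝ → ℝ} (hF : ContDiff ℝ (⊤ : ℕ∞) F) : ContDiff ℝ (⊤ : ℕ∞) (P2 F) :=
  (ContinuousLinearMap.apply ℝ ℝ ((0 : ℝ), (1 : ℝ))).contDiff.comp (hF.fderiv_right (by simp))

lemma fderiv_pd {F : ℝ × ℝ → ℝ} (hF : ContDiff ℝ (⊤ : ℕ∞) F) (p : ℝ × ℝ) (v w : ℝ × ℝ) :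
    fderiv ℝ (fun q => fderiv ℝ F q v) p w = fderiv ℝ (fderiv ℝ F) p w v := by
  have hdF : Differentiable ℝ (fderiv ℝ F) := (hF.fderiv_right (m := (⊤ : ℕ∞)) (by simp)).differentiable (by simp)
  have h : HasFDerivAt (fun q => fderiv ℝ F q v)
      ((ContinuousLinearMap.apply ℝ ℝ v).comp (fderiv ℝ (fderiv ℝ F) p)) p :=
    (ContinuousLinearMap.apply ℝ ℝ v).hasFDerivAt.comp p (hdF p).hasFDerivAt
  rw [h.fderiv]; rfl

lemma pd_symm {F : ℝ × ℝ → ℝ} (hF : ContDiff ℝ (⊤ : ℕ∞) F) (p v w : ℝ × ℝ) :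
    fderiv ℝ (fun q => fderiv ℝ F q v) p w = fderiv ℝ (fun q => fderiv ℝ F q w) p v := by
  rw [fderiv_pd hF p v w, fderiv_pd hF p w v]
  exact second_derivative_symmetric (fun y => (hF.differentiable (by simp) y).hasFDerivAt)
    (((hF.fderiv_right (m := (⊤ : ℕ∞)) (by simp)).differentiable (by simp) p).hasFDerivAt) w v

lemma P1_P2_symm {F : ℝ × ℝ → ℝ} (hF : ContDiff ℝ (⊤ : ℕ∞) F) (q : ℝ × ℝ) :
    P1 (P2 F) q = P2 (P1 F) q := by
  show fderiv ℝ (fun q' => fderiv ℝ F q' (0, 1)) q (1, 0)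
      = fderiv ℝ (fun q' => fderiv ℝ F q' (1, 0)) q (0, 1)
  exact pd_symm hF q (0, 1) (1, 0)

lemma algebra_key (s c r A B Att B2 Y Z : ℝ) (hr : r ≠ 0)
    (hsc : s ^ 2 + c ^ 2 = 1)
    (H0 : -Att + B2 + B / r = 2 * s * c / (2 * r ^ 2))
    (H1 : -Y + Z + (B2 * r - B * 1) / r ^ 2
        - ((2 * c ^ 2 - 1) * (2 * B) * (2 * r ^ 2) - 2 * s * c * (2 * (2 * r ^ 1)))
          / (2 * r ^ 2) ^ 2 = 0) :
    (Y - (-s * A * A + c * Att) / r)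
      - (Z - (((-s * B * B + c * B2) * r + c * B * 1 - c * B * 1) * r ^ 2
            - (c * B * r - s * 1) * (2 * r ^ 1)) / (r ^ 2) ^ 2)
      - (B2 - (c * B * r - s * 1) / r ^ 2) / r
      + 2 * (1 + c) / r ^ 2 * (B - s / r)
      = s / r * (A ^ 2 - (B - s / r) ^ 2) := by
  have hAtt : Att = B2 + B / r - 2 * s * c / (2 * r ^ 2) := by linarith
  have hZ : Z = Y - (B2 * r - B * 1) / r ^ 2
      + ((2 * c ^ 2 - 1) * (2 * B) * (2 * r ^ 2) - 2 * s * c * (2 * (2 * r ^ 1)))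
        / (2 * r ^ 2) ^ 2 := by linarith
  rw [hAtt, hZ]
  field_simp
  linear_combination (s - 2 * r * B) * hsc

/-- If `u` solves the co-rotational wave map equation
`-u_tt + u_rr + u_r/r = sin(2u)/(2r²)` on an open set `Ω ⊆ ℝ × (0,∞)`, then its
gauge derivative `w = u_r - sin(u)/r` solves
`w_tt - w_rr - w_r/r + (2(1+cos u)/r²) w = (sin u / r)(u_t² - w²)` on `Ω`. -/
theorem gauge_deriv_equation (u : ℝ → ℝ → ℝ) (Ω : Set (ℝ × ℝ))
    (hΩopen : IsOpen Ω) (hΩpos : ∀ p ∈ Ω, 0 < p.2)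
    (hsmooth : ContDiff ℝ (⊤ : ℕ∞) (fun p : ℝ × ℝ => u p.1 p.2))
    (heq : ∀ p ∈ Ω,
      -(deriv (fun t => deriv (fun t' => u t' p.2) t) p.1)
        + deriv (deriv (u p.1)) p.2 + deriv (u p.1) p.2 / p.2
      = Real.sin (2 * u p.1 p.2) / (2 * p.2 ^ 2)) :
    ∀ p ∈ Ω,
      (deriv (fun t => deriv (fun t' =>
          deriv (u t') p.2 - Real.sin (u t' p.2) / p.2) t) p.1)
        - deriv (deriv (fun s =>
            deriv (u p.1) s - Real.sin (u p.1 s) / s)) p.2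
        - deriv (fun s => deriv (u p.1) s - Real.sin (u p.1 s) / s) p.2 / p.2
        + 2 * (1 + Real.cos (u p.1 p.2)) / p.2 ^ 2 *
            (deriv (u p.1) p.2 - Real.sin (u p.1 p.2) / p.2)
      = Real.sin (u p.1 p.2) / p.2 *
          ((deriv (fun t' => u t' p.2) p.1) ^ 2
            - (deriv (u p.1) p.2 - Real.sin (u p.1 p.2) / p.2) ^ 2) := by
  intro p hp
  obtain ⟨t, r⟩ := p
  have hr : 0 < r := hΩpos (t, r) hp
  have hr0 : r ≠ 0 := ne_of_gt hr
  set Uf : ℝ × ℝ → ℝ := fun q => u q.1 q.2 with hUf_def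
  have hU : ContDiff ℝ (⊤ : ℕ∞) Uf := hsmooth
  have hP1U : ContDiff ℝ (⊤ : ℕ∞) (P1 Uf) := contDiff_P1 hU
  have hP2U : ContDiff ℝ (⊤ : ℕ∞) (P2 Uf) := contDiff_P2 hU
  have hP1P1U : ContDiff ℝ (⊤ : ℕ∞) (P1 (P1 Uf)) := contDiff_P1 hP1U
  have hP1P2U : ContDiff ℝ (⊤ : ℕ∞) (P1 (P2 Uf)) := contDiff_P1 hP2U
  have hP2P2U : ContDiff ℝ (⊤ : ℕ∞) (P2 (P2 Uf)) := contDiff_P2 hP2U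
  have hder1 : ∀ x y : ℝ, deriv (fun t' => u t' y) x = P1 Uf (x, y) :=
    fun x y => (hasDerivAt_P1 hU x y).deriv
  have hder2 : ∀ x y : ℝ, deriv (u x) y = P2 Uf (x, y) :=
    fun x y => (hasDerivAt_P2 hU x y).deriv
  have hder2' : ∀ x : ℝ, deriv (u x) = fun y => P2 Uf (x, y) :=
    fun x => funext fun y => hder2 x y
  -- the PDE in terms of partial-derivative operators
  have E : ∀ q ∈ Ω, -(P1 (P1 Uf) q) + P2 (P2 Uf) q + P2 Uf q / q.2
      = Real.sin (2 * u q.1 q.2) / (2 * q.2 ^ 2) := by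
    intro q hq
    have h := heq q hq
    rw [show (fun t0 => deriv (fun t' => u t' q.2) t0) = (fun t0 => P1 Uf (t0, q.2)) from
      funext fun x => hder1 x q.2] at h
    rw [show deriv (fun t0 => P1 Uf (t0, q.2)) q.1 = P1 (P1 Uf) q from
      (hasDerivAt_P1 hP1U q.1 q.2).deriv] at h
    rw [hder2' q.1] at h
    rw [show deriv (fun y => P2 Uf (q.1, y)) q.2 = P2 (P2 Uf) q from
      (hasDerivAt_P2 hP2U q.1 q.2).deriv] at h
    exact h
  -- first goal term
  have inner_eq : ∀ x : ℝ,
      deriv (fun t' => deriv (u t') r - Real.sin (u t' r) / r) x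
        = P1 (P2 Uf) (x, r) - Real.cos (u x r) * P1 Uf (x, r) / r := by
    intro x
    rw [show (fun t' => deriv (u t') r - Real.sin (u t' r) / r)
        = (fun t' => P2 Uf (t', r) - Real.sin (u t' r) / r) from
      funext fun y => by rw [hder2 y r]]
    exact ((hasDerivAt_P1 hP2U x r).sub
      (((hasDerivAt_P1 hU x r).sin).div_const r)).deriv
  have e1 : deriv (fun t0 => deriv (fun t' => deriv (u t') r - Real.sin (u t' r) / r) t0) t
      = P1 (P1 (P2 Uf)) (t, r)
        - (-Real.sin (u t r) * P1 Uf (t, r) * P1 Uf (t, r)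
            + Real.cos (u t r) * P1 (P1 Uf) (t, r)) / r := by
    rw [show (fun t0 => deriv (fun t' => deriv (u t') r - Real.sin (u t' r) / r) t0)
        = (fun t0 => P1 (P2 Uf) (t0, r) - Real.cos (u t0 r) * P1 Uf (t0, r) / r) from
      funext inner_eq]
    exact ((hasDerivAt_P1 hP1P2U t r).sub
      ((((hasDerivAt_P1 hU t r).cos).mul (hasDerivAt_P1 hP1U t r)).div_const r)).deriv
  -- radial derivative of w
  have hfun2 : (fun s => deriv (u t) s - Real.sin (u t s) / s)
      = (fun s => P2 Uf (t, s) - Real.sin (u t s) / s) :=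
    funext fun y => by rw [hder2 t y]
  have hC : ∀ y : ℝ, y ≠ 0 →
      HasDerivAt (fun s => P2 Uf (t, s) - Real.sin (u t s) / s)
        (P2 (P2 Uf) (t, y)
          - (Real.cos (u t y) * P2 Uf (t, y) * y - Real.sin (u t y) * 1) / y ^ 2) y := by
    intro y hy
    exact (hasDerivAt_P2 hP2U t y).sub
      (((hasDerivAt_P2 hU t y).sin).div (hasDerivAt_id y) hy)
  have e3 : deriv (fun s => deriv (u t) s - Real.sin (u t s) / s) r
      = P2 (P2 Uf) (t, r)
        - (Real.cos (u t r) * P2 Uf (t, r) * r - Real.sin (u t r) * 1) / r ^ 2 := by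
    rw [hfun2]; exact (hC r hr0).deriv
  -- second radial derivative of w
  have hEE : deriv (fun s => deriv (u t) s - Real.sin (u t s) / s)
      =ᶠ[𝓝 r] (fun y => P2 (P2 Uf) (t, y)
        - (Real.cos (u t y) * P2 Uf (t, y) * y - Real.sin (u t y) * 1) / y ^ 2) := by
    filter_upwards [eventually_ne_nhds hr0] with y hy
    rw [hfun2]; exact (hC y hy).deriv
  have hφ : HasDerivAt (fun y => P2 (P2 Uf) (t, y)
      - (Real.cos (u t y) * P2 Uf (t, y) * y - Real.sin (u t y) * 1) / y ^ 2)
      (P2 (P2 (P2 Uf)) (t, r)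
        - ((((-Real.sin (u t r) * P2 Uf (t, r)) * P2 Uf (t, r)
              + Real.cos (u t r) * P2 (P2 Uf) (t, r)) * r
            + Real.cos (u t r) * P2 Uf (t, r) * 1
            - Real.cos (u t r) * P2 Uf (t, r) * 1) * r ^ 2
          - (Real.cos (u t r) * P2 Uf (t, r) * r - Real.sin (u t r) * 1)
            * ((2 : ℝ) * r ^ 1)) / (r ^ 2) ^ 2) r := by
    have hnum : HasDerivAt (fun y => Real.cos (u t y) * P2 Uf (t, y) * y - Real.sin (u t y) * 1)
        ((((-Real.sin (u t r) * P2 Uf (t, r)) * P2 Uf (t, r)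
            + Real.cos (u t r) * P2 (P2 Uf) (t, r)) * r
          + Real.cos (u t r) * P2 Uf (t, r) * 1)
          - Real.cos (u t r) * P2 Uf (t, r) * 1) r :=
      ((((hasDerivAt_P2 hU t r).cos).mul (hasDerivAt_P2 hP2U t r)).mul (hasDerivAt_id r)).sub
        (((hasDerivAt_P2 hU t r).sin).mul_const 1)
    exact (hasDerivAt_P2 hP2P2U t r).sub
      (hnum.div (hasDerivAt_pow 2 r) (pow_ne_zero 2 hr0))
  have e2 := (Filter.EventuallyEq.deriv_eq hEE).trans hφ.deriv
  -- differentiated PDE in the radial direction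
  have hS : {y : ℝ | (t, y) ∈ Ω} ∈ nhds r :=
    (hΩopen.preimage (continuous_const.prodMk continuous_id)).mem_nhds hp
  have hg0 : (fun y => -(P1 (P1 Uf) (t, y)) + P2 (P2 Uf) (t, y) + P2 Uf (t, y) / y
      - Real.sin (2 * u t y) / (2 * y ^ 2)) =ᶠ[𝓝 r] (fun _ => (0 : ℝ)) := by
    filter_upwards [hS] with y hy
    have h := E (t, y) hy
    dsimp only at h ⊢
    rw [h, sub_self]
  have hgd : HasDerivAt (fun y => -(P1 (P1 Uf) (t, y)) + P2 (P2 Uf) (t, y) + P2 Uf (t, y) / y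
      - Real.sin (2 * u t y) / (2 * y ^ 2))
      (-(P2 (P1 (P1 Uf)) (t, r)) + P2 (P2 (P2 Uf)) (t, r)
        + (P2 (P2 Uf) (t, r) * r - P2 Uf (t, r) * 1) / r ^ 2
        - (Real.cos (2 * u t r) * (2 * P2 Uf (t, r)) * (2 * r ^ 2)
            - Real.sin (2 * u t r) * (2 * ((2 : ℝ) * r ^ 1))) / (2 * r ^ 2) ^ 2) r := by
    have h1 := (hasDerivAt_P2 (contDiff_P1 hP1P1U) t r)
    exact (((hasDerivAt_P2 hP1P1U t r).neg.add (hasDerivAt_P2 hP2P2U t r)).add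
        ((hasDerivAt_P2 hP2U t r).div (hasDerivAt_id r) hr0)).sub
      ((((hasDerivAt_P2 hU t r).const_mul 2).sin).div
        ((hasDerivAt_pow 2 r).const_mul 2)
        (mul_ne_zero two_ne_zero (pow_ne_zero 2 hr0)))
  have hz := (Filter.EventuallyEq.deriv_eq hg0).trans (deriv_const r 0)
  have H1 := hgd.deriv.symm.trans hz
  have H0 := E (t, r) hp
  dsimp only at H0
  -- mixed partials commute
  have hsymm1 : P1 (P2 Uf) = P2 (P1 Uf) := funext fun q => P1_P2_symm hU q
  have hXY : P1 (P1 (P2 Uf)) (t, r) = P2 (P1 (P1 Uf)) (t, r) := by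
    rw [hsymm1]; exact P1_P2_symm hP1U (t, r)
  -- assemble
  dsimp only
  rw [e1, e2, e3, hder1 t r, hder2 t r, hXY]
  rw [Real.sin_two_mul] at H0
  rw [Real.sin_two_mul, Real.cos_two_mul] at H1
  have key := algebra_key (Real.sin (u t r)) (Real.cos (u t r)) r
    (P1 Uf (t, r)) (P2 Uf (t, r)) (P1 (P1 Uf) (t, r)) (P2 (P2 Uf) (t, r))
    (P2 (P1 (P1 Uf)) (t, r)) (P2 (P2 (P2 Uf)) (t, r)) hr0
    (Real.sin_sq_add_cos_sq (u t r)) H0 H1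
  linear_combination key
end

section
/- For the weight m_k(r) defined by m_k(r) = min{1, log(1+r²)/⟨k⟩} for k < 0 and m_k(r) = min{1, r²·2^{2k}} for k ≥ 0, where ⟨k⟩ = √(4+k²), one has ∫₀^∞ (m_k(r)/r)² · (1 + 2^k r)^{-1} r dr ≲ |k| for k < 0 with an absolute implicit constant. -/
open Real MeasureTheory Set

/-! Put `T = 2⁻ᵏ ≥ 2`. Since `log (1 + x) ≤ x` and `⟨k⟩ ≥ 2`, the integrand is at most `r³`; since
`m_k ≤ 1`, it is at most `1/r`, and, using `1 + r/T ≥ r/T`, at most `T/r²`. Using these bounds on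
`(0, 1]`, `(1, T]` and `(T, ∞)` respectively, the integral is at most `1/4 + log T + 1`, and
`log T = |k| log 2`, so the integral is `≤ 5/4 + |k| log 2 ≤ 2|k|`. -/

namespace MkWeight

noncomputable def integrand (s c r : ℝ) : ℝ :=
  (min 1 (log (1 + r ^ 2) / s) / r) ^ 2 * (1 + c * r)⁻¹ * r

noncomputable def majorant (T : ℝ) : ℝ → ℝ :=
  (Ioc 0 1).indicator (fun r => r ^ 3) + (Ioc 1 T).indicator (·⁻¹) +
    (Ioi T).indicator (fun r => T * r ^ (-2 : ℝ))

theorem two_le_sqrt_four_add_sq (x : ℝ) : 2 ≤ √(4 + x ^ 2) :=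
  le_sqrt_of_sq_le (by nlinarith)

theorem min_one_log_div_le {s : ℝ} (hs : 2 ≤ s) (r : ℝ) :
    min 1 (log (1 + r ^ 2) / s) ≤ r ^ 2 / 2 := by
  have hlog : log (1 + r ^ 2) ≤ r ^ 2 := by
    linarith [log_le_sub_one_of_pos (x := 1 + r ^ 2) (by positivity)]
  exact (min_le_right _ _).trans (div_le_div₀ (sq_nonneg r) hlog two_pos hs)

theorem min_one_log_div_nonneg {s : ℝ} (hs : 0 ≤ s) (r : ℝ) :
    0 ≤ min 1 (log (1 + r ^ 2) / s) :=
  le_min zero_le_one (div_nonneg (log_nonneg (by nlinarith)) hs)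

section Pointwise

variable {s c r : ℝ}

theorem integrand_eq (hc : 0 < c) (hr : 0 < r) :
    integrand s c r = min 1 (log (1 + r ^ 2) / s) ^ 2 / (r * (1 + c * r)) := by
  have : 0 < 1 + c * r := by positivity
  rw [integrand]
  field_simp

theorem integrand_le_pow_three (hs : 2 ≤ s) (hc : 0 < c) (hr : 0 < r) :
    integrand s c r ≤ r ^ 3 := by
  have hm : 0 ≤ min 1 (log (1 + r ^ 2) / s) := min_one_log_div_nonneg (by linarith) r
  rw [integrand_eq hc hr]
  calc _ ≤ (r ^ 2 / 2) ^ 2 / (r * 1) := by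
        gcongr
        · exact min_one_log_div_le hs r
        · nlinarith
    _ ≤ r ^ 3 := by
        field_simp
        nlinarith [pow_pos hr 3]

theorem integrand_le_inv (hs : 0 ≤ s) (hc : 0 < c) (hr : 0 < r) :
    integrand s c r ≤ r⁻¹ := by
  have hm := min_one_log_div_nonneg hs r
  rw [integrand_eq hc hr, inv_eq_one_div]
  gcongr
  · exact pow_le_one₀ hm (min_le_left _ _)
  · nlinarith

theorem integrand_le_inv_mul_rpow (hs : 0 ≤ s) (hc : 0 < c) (hr : 0 < r) :
    integrand s c r ≤ c⁻¹ * r ^ (-2 : ℝ) := by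
  have hm := min_one_log_div_nonneg hs r
  rw [integrand_eq hc hr, rpow_neg hr.le, rpow_two]
  calc _ ≤ 1 / (r * (c * r)) := by
        gcongr
        · exact pow_le_one₀ hm (min_le_left _ _)
        · linarith
    _ = c⁻¹ * (r ^ 2)⁻¹ := by field_simp

end Pointwise

section Majorant

variable {T : ℝ}

theorem majorant_nonneg (hT : 0 ≤ T) (r : ℝ) : 0 ≤ majorant T r := by
  simp only [majorant, Pi.add_apply]
  refine add_nonneg (add_nonneg ?_ ?_) ?_ <;> refine indicator_nonneg (fun x hx => ?_) r
  · exact pow_nonneg hx.1.le 3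
  · exact inv_nonneg.2 (zero_le_one.trans hx.1.le)
  · exact mul_nonneg hT (rpow_nonneg (hT.trans hx.le) _)

theorem integrableOn_majorant_pieces (hT : 0 < T) :
    IntegrableOn (fun r : ℝ => r ^ 3) (Ioc 0 1) ∧ IntegrableOn (·⁻¹) (Ioc 1 T) ∧
      IntegrableOn (fun r => T * r ^ (-2 : ℝ)) (Ioi T) := by
  refine ⟨(continuous_pow 3).integrableOn_Icc.mono_set Ioc_subset_Icc_self,
    ((continuousOn_inv₀.mono fun x hx => ?_).integrableOn_Icc).mono_set Ioc_subset_Icc_self,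
    (integrableOn_Ioi_rpow_of_lt (by norm_num) hT).const_mul T⟩
  exact (zero_lt_one.trans_le hx.1).ne'

theorem integrable_majorant (hT : 0 < T) : Integrable (majorant T) :=
  have ⟨h₁, h₂, h₃⟩ := integrableOn_majorant_pieces hT
  ((h₁.integrable_indicator measurableSet_Ioc).add (h₂.integrable_indicator measurableSet_Ioc)).add
    (h₃.integrable_indicator measurableSet_Ioi)

theorem integral_majorant (hT : 1 ≤ T) : ∫ r, majorant T r = 5 / 4 + log T := by
  have hT0 : 0 < T := zero_lt_one.trans_le hT
  have h₁ : ∫ r in Ioc (0 : ℝ) 1, r ^ 3 = 1 / 4 := by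
    rw [← intervalIntegral.integral_of_le zero_le_one, integral_pow]
    norm_num
  have h₂ : ∫ r in Ioc 1 T, r⁻¹ = log T := by
    rw [← intervalIntegral.integral_of_le hT, integral_inv_of_pos one_pos hT0, div_one]
  have h₃ : ∫ r in Ioi T, T * r ^ (-2 : ℝ) = 1 := by
    rw [integral_const_mul, integral_Ioi_rpow_of_lt (by norm_num) hT0]
    norm_num [rpow_neg_one, hT0.ne']
  obtain ⟨i₁, i₂, i₃⟩ := integrableOn_majorant_pieces hT0
  rw [majorant, integral_add' ((i₁.integrable_indicator measurableSet_Ioc).add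
      (i₂.integrable_indicator measurableSet_Ioc)) (i₃.integrable_indicator measurableSet_Ioi),
    integral_add' (i₁.integrable_indicator measurableSet_Ioc)
      (i₂.integrable_indicator measurableSet_Ioc),
    integral_indicator measurableSet_Ioc, integral_indicator measurableSet_Ioc,
    integral_indicator measurableSet_Ioi, h₁, h₂, h₃]
  ring

end Majorant

theorem indicator_integrand_le_majorant {s c : ℝ} (hs : 2 ≤ s) (hc : 0 < c) (hc₁ : c ≤ 1)
    (r : ℝ) : (Ioi 0).indicator (integrand s c) r ≤ majorant c⁻¹ r := by
  have hT : 1 ≤ c⁻¹ := (one_le_inv₀ hc).2 hc₁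
  rcases le_or_gt r 0 with hr | hr
  · rw [indicator_of_notMem (s := Ioi 0) (not_lt.2 hr)]
    exact majorant_nonneg (zero_le_one.trans hT) r
  rw [indicator_of_mem (s := Ioi 0) hr, majorant, Pi.add_apply, Pi.add_apply]
  rcases le_or_gt r 1 with h₁ | h₁
  · have : ¬ c⁻¹ < r := not_lt.2 (h₁.trans hT)
    simpa [indicator_apply, hr, h₁, not_lt.2 h₁, this] using integrand_le_pow_three hs hc hr
  rcases le_or_gt r c⁻¹ with h₂ | h₂
  · simpa [indicator_apply, h₁, h₂, not_le.2 h₁, not_lt.2 h₂] using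
      integrand_le_inv (by linarith) hc hr
  · simpa [indicator_apply, h₁, h₂, not_le.2 h₁, not_le.2 h₂] using
      integrand_le_inv_mul_rpow (by linarith) hc hr

theorem setIntegral_integrand_le {s c : ℝ} (hs : 2 ≤ s) (hc : 0 < c) (hc₁ : c ≤ 1) :
    ∫ r in Ioi 0, integrand s c r ≤ 5 / 4 + log c⁻¹ := by
  have hT : 1 ≤ c⁻¹ := (one_le_inv₀ hc).2 hc₁
  rw [← integral_indicator measurableSet_Ioi, ← integral_majorant hT]
  refine integral_mono_of_nonneg (Filter.Eventually.of_forall fun r => ?_)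
    (integrable_majorant (inv_pos.2 hc))
    (Filter.Eventually.of_forall (indicator_integrand_le_majorant hs hc hc₁))
  refine indicator_nonneg (fun r (hr : 0 < r) => ?_) r
  rw [integrand_eq hc hr]
  positivity

end MkWeight

/-- For `k < 0` and `m_k(r) = min{1, log(1+r²)/⟨k⟩}` with `⟨k⟩ = √(4+k²)`, one has
`∫₀^∞ (m_k(r)/r)² (1 + 2^k r)⁻¹ r dr ≲ |k|`. -/
theorem mk_weight_integral_bound :
    ∃ C > (0 : ℝ), ∀ k : ℤ, k < 0 →
      (∫ r in Set.Ioi (0 : ℝ),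
          (min 1 (Real.log (1 + r ^ 2) / Real.sqrt (4 + (k : ℝ) ^ 2)) / r) ^ 2
            * (1 + (2 : ℝ) ^ k * r)⁻¹ * r)
        ≤ C * |(k : ℝ)| := by
  refine ⟨2, two_pos, fun k hk => ?_⟩
  have hk₁ : 1 ≤ |(k : ℝ)| := by rw [← Int.cast_abs]; exact_mod_cast Int.one_le_abs hk.ne
  calc ∫ r in Ioi 0, MkWeight.integrand √(4 + (k : ℝ) ^ 2) (2 ^ k) r
      ≤ 5 / 4 + log ((2 : ℝ) ^ k)⁻¹ :=
        MkWeight.setIntegral_integrand_le (MkWeight.two_le_sqrt_four_add_sq _) (zpow_pos two_pos k)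
          (zpow_le_one_of_nonpos₀ one_le_two hk.le)
    _ = 5 / 4 + |(k : ℝ)| * log 2 := by
        rw [log_inv, log_zpow, abs_of_neg (Int.cast_lt_zero.2 hk)]
        ring
    _ ≤ 2 * |(k : ℝ)| := by nlinarith [log_two_lt_d9]
end
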